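/- Let μ > 1 and p̄ be the shifted Poisson distribution (p̄₀=0, p̄ₙ = (μ−1)^{n−1}/(n−1)!·e^{−(μ−1)} for n≥1). Then for any n ≥ 0, the operator Q̂ (defined by Q̂[p]₀ = −(μ−1)p₀ and Q̂[p]ₙ = n p_{n+1} + (μ−1)p_{n−1} − (n−1)pₙ − (μ−1)pₙ for n ≥ 1) satisfies the Fokker–Planck form Q̂[p]ₙ = (μ−1)·D⁻(p̄ₙ·D⁺(pₙ/p̄ₙ)), where D⁺aₙ = a_{n+1} − aₙ for n ≥ 0, D⁻aₙ = aₙ − a_{n−1} for n ≥ 1 and D⁻a₀ = a₀, with the convention a/a = 1 when a = 0. -/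

import Mathlib

open Real

/-- Backward difference: `D⁻aₙ = aₙ − a_{n−1}` for n ≥ 1, `D⁻a₀ = a₀`. -/
def Dminus (a : ℕ → ℝ) : ℕ → ℝ
  | 0 => a 0
  | (n + 1) => a (n + 1) - a n

/-- The linear operator Q̂ of the mean-field system. -/
noncomputable def Qhat (μ : ℝ) (p : ℕ → ℝ) : ℕ → ℝ
  | 0 => -(μ - 1) * p 0
  | (n + 1) => ((n : ℝ) + 1) * p (n + 2) + (μ - 1) * p n
      - ((n : ℝ) + 1 - 1) * p (n + 1) - (μ - 1) * p (n + 1)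

/-- Fokker–Planck form of Q̂: `Q̂[p]ₙ = (μ−1)·D⁻(p̄ₙ·D⁺(pₙ/p̄ₙ))`, where
`p̄ₙ·D⁺(pₙ/p̄ₙ) = p̄ₙ·p_{n+1}/p̄_{n+1} − pₙ` after applying the paper's convention
`a/a = 1` when `a = 0` (so that `p̄ₙ·(pₙ/p̄ₙ) = pₙ` even at n = 0 where p̄₀ = 0). -/
theorem stmt_16 (μ : ℝ) (hμ : 1 < μ)
    (pbar : ℕ → ℝ) (hbar0 : pbar 0 = 0)
    (hbar : ∀ n : ℕ, 1 ≤ n →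
      pbar n = (μ - 1) ^ (n - 1) / (n - 1).factorial * exp (-(μ - 1)))
    (p : ℕ → ℝ) :
    ∀ n : ℕ, Qhat μ p n
      = (μ - 1) * Dminus (fun m => pbar m * (p (m + 1) / pbar (m + 1)) - p m) n := by
  have hne : μ - 1 ≠ 0 := by intro h; linarith
  have hbarpos : ∀ m : ℕ, pbar (m + 1) = (μ - 1) ^ m / m.factorial * exp (-(μ - 1)) := by
    intro m
    have := hbar (m + 1) (by omega)
    simpa using this
  have hbarne : ∀ m : ℕ, pbar (m + 1) ≠ 0 := by
    intro m
    rw [hbarpos m]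
    have h1 : (0:ℝ) < μ - 1 := by linarith
    positivity
  have key : ∀ k : ℕ, pbar (k + 1) * (p (k + 2) / pbar (k + 2)) = ((k:ℝ) + 1) * p (k + 2) / (μ - 1) := by
    intro k
    have h2 := hbarpos (k + 1)
    rw [hbarpos k, h2]
    have hfac : ((k+1).factorial : ℝ) = ((k:ℝ)+1) * k.factorial := by
      push_cast [Nat.factorial_succ]; ring
    have hexp : exp (-(μ-1)) ≠ 0 := exp_ne_zero _
    have hfk : (k.factorial : ℝ) ≠ 0 := Nat.cast_ne_zero.mpr k.factorial_pos.ne'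
    have hk1 : ((k:ℝ)+1) ≠ 0 := by positivity
    rw [hfac, pow_succ]
    field_simp
  intro n
  match n with
  | 0 => simp [Qhat, Dminus, hbar0]; ring
  | 1 =>
    simp only [Qhat, Dminus, hbar0]
    rw [key 0]
    field_simp
    ring
  | (n + 2) =>
    simp only [Qhat, Dminus]
    rw [key (n+1), key n]
    field_simp
    push_cast
    ring
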